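/- Let G=(V,E) be a directed graph and v₀, v_g ∈ V with v₀ ≠ v_g and (v₀,v_g) ∉ E. Then there is no positional strategy σ_r for the runner in S^tb(G) such that every play of S^tb(G) from ((E,v₀),r) consistent with σ_r contains a state whose runner position is v_g (i.e., ⟨⟨{r}⟩⟩ F g fails at ((E,v₀),r)). -/

import Mathlib

/-- A sabotage game-state: the set of remaining edges together with the runner's position. -/
abbrev GState (V : Type*) := Finset (V × V) × V

/-- The two agents: runner and demon. -/
inductive Agent : Type
  | r : Agent
  | d : Agent
deriving DecidableEq

/-- A state of the turn-based sabotage game structure: a game-state plus the agent owning it. -/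
abbrev TbState (V : Type*) := GState V × Agent

section Defs

variable {V : Type*} [DecidableEq V]

/-- Runner's available actions in the turn-based structure (`none` is skip). -/
def tbActR (s : TbState V) : Set (Option (V × V)) :=
  match s.2 with
  | Agent.r => {a | ∃ e ∈ s.1.1, e.1 = s.1.2 ∧ a = some e}
  | Agent.d => {none}

/-- Demon's available actions in the turn-based structure (`none` is skip). -/
def tbActD (s : TbState V) : Set (Option (V × V)) :=
  match s.2 with
  | Agent.r => {none}
  | Agent.d => {a | ∃ e ∈ s.1.1, a = some e}

/-- Transition function of the turn-based sabotage game structure. -/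
def tbDelta (s : TbState V) (ar ad : Option (V × V)) : TbState V :=
  match ar, ad with
  | some e, _ => ((s.1.1, e.2), Agent.d)
  | none, some e => ((s.1.1.erase e, s.1.2), Agent.r)
  | none, none => s

/-- `t` arises from `s` in the turn-based structure by the available action pair `(ar, ad)`. -/
def tbStepBy (s : TbState V) (ar ad : Option (V × V)) (t : TbState V) : Prop :=
  ar ∈ tbActR s ∧ ad ∈ tbActD s ∧ t = tbDelta s ar ad

/-- One-step transition relation of the turn-based structure. -/
def tbStep (s t : TbState V) : Prop := ∃ ar ad, tbStepBy s ar ad t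

/-- Runner's available actions in the concurrent structure. -/
def conActR (s : GState V) : Set (V × V) := {e | e ∈ s.1 ∧ e.1 = s.2}

/-- Demon's available actions in the concurrent structure. -/
def conActD (s : GState V) : Set (V × V) := {e | e ∈ s.1}

/-- Transition function of the concurrent sabotage game structure. -/
def conDelta (s : GState V) (er ed : V × V) : GState V :=
  if er = ed then s else (s.1.erase ed, er.2)

/-- `t` arises from `s` in the concurrent structure by the available action pair `(er, ed)`. -/
def conStepBy (s : GState V) (er ed : V × V) (t : GState V) : Prop :=
  er ∈ s.1 ∧ er.1 = s.2 ∧ ed ∈ s.1 ∧ t = conDelta s er ed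

/-- One-step transition relation of the concurrent structure. -/
def conStep (s t : GState V) : Prop := ∃ er ed, conStepBy s er ed t

/-- Runner's available actions in the general structure (`none` is skip, always available). -/
def genActR (s : GState V) : Set (Option (V × V)) :=
  {a | a = none ∨ ∃ e ∈ s.1, e.1 = s.2 ∧ a = some e}

/-- Demon's available actions in the general structure (`none` is skip, always available). -/
def genActD (s : GState V) : Set (Option (V × V)) :=
  {a | a = none ∨ ∃ e ∈ s.1, a = some e}

/-- Transition function of the general sabotage game structure. -/
def genDelta (s : GState V) (ar ad : Option (V × V)) : GState V :=
  match ar, ad with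
  | none, none => s
  | none, some ed => (s.1.erase ed, s.2)
  | some er, none => (s.1, er.2)
  | some er, some ed => if er = ed then s else (s.1.erase ed, er.2)

/-- `t` arises from `s` in the general structure by the available action pair `(ar, ad)`. -/
def genStepBy (s : GState V) (ar ad : Option (V × V)) (t : GState V) : Prop :=
  ar ∈ genActR s ∧ ad ∈ genActD s ∧ t = genDelta s ar ad

/-- One-step transition relation of the general structure. -/
def genStep (s t : GState V) : Prop := ∃ ar ad, genStepBy s ar ad t

/-- A (finite or infinite) play: a maximal sequence of states starting at `s₀`, where each state
arises from its predecessor by the step relation. `p n = none` means the play has already ended. -/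
def IsPlay {S : Type*} (step : S → S → Prop) (s₀ : S) (p : ℕ → Option S) : Prop :=
  p 0 = some s₀ ∧
  (∀ n t, p (n + 1) = some t → ∃ s, p n = some s ∧ step s t) ∧
  (∀ n s, p n = some s → (∃ t, step s t) → (p (n + 1)).isSome)

/-- The structural label of a game-state `(E', v)`: the proposition `p_v` (coded `Sum.inl v`)
together with the propositions `q_e` for `e ∈ E'` (coded `Sum.inr e`). -/
def label (s : GState V) : Set (V ⊕ (V × V)) :=
  {x | x = Sum.inl s.2 ∨ ∃ e ∈ s.1, x = Sum.inr e}

/-- `σ` is a positional runner strategy in the turn-based structure. -/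
def TbStratR (σ : TbState V → Option (V × V)) : Prop :=
  ∀ s, (tbActR s).Nonempty → σ s ∈ tbActR s

/-- `σ` is a positional demon strategy in the turn-based structure. -/
def TbStratD (σ : TbState V → Option (V × V)) : Prop :=
  ∀ s, (tbActD s).Nonempty → σ s ∈ tbActD s

/-- The play `p` is consistent with the runner strategy `σ` in the turn-based structure. -/
def TbConsR (σ : TbState V → Option (V × V)) (p : ℕ → Option (TbState V)) : Prop :=
  ∀ n s t, p n = some s → p (n + 1) = some t → ∃ ad, tbStepBy s (σ s) ad t

/-- The play `p` is consistent with the demon strategy `σ` in the turn-based structure. -/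
def TbConsD (σ : TbState V → Option (V × V)) (p : ℕ → Option (TbState V)) : Prop :=
  ∀ n s t, p n = some s → p (n + 1) = some t → ∃ ar, tbStepBy s ar (σ s) t

/-- The play `p` is consistent with both strategies in the turn-based structure. -/
def TbConsRD (σr σd : TbState V → Option (V × V)) (p : ℕ → Option (TbState V)) : Prop :=
  ∀ n s t, p n = some s → p (n + 1) = some t → tbStepBy s (σr s) (σd s) t

/-- `σ` is a positional runner strategy in the concurrent structure. -/
def ConStratR (σ : GState V → V × V) : Prop :=
  ∀ s, (conActR s).Nonempty → σ s ∈ conActR s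

/-- `σ` is a positional demon strategy in the concurrent structure. -/
def ConStratD (σ : GState V → V × V) : Prop :=
  ∀ s, (conActD s).Nonempty → σ s ∈ conActD s

/-- The play `p` is consistent with both strategies in the concurrent structure. -/
def ConConsRD (σr σd : GState V → V × V) (p : ℕ → Option (GState V)) : Prop :=
  ∀ n s t, p n = some s → p (n + 1) = some t → conStepBy s (σr s) (σd s) t

/-- Runner has a winning strategy in the turn-based reachability sabotage game with goal `vg`,
from the game-state `(E', v)`. -/
def Reach (vg : V) (E' : Finset (V × V)) (v : V) : Prop :=
  v = vg ∨ ∃ e ∈ E', e.1 = v ∧ ∀ f ∈ E', Reach vg (E'.erase f) e.2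
termination_by E'.card
decreasing_by exact Finset.card_erase_lt_of_mem (by assumption)

/-- Runner has a winning strategy in the turn-based liveness sabotage game with liveness
parameter `b ≥ 1`, from the game-state `(E', v)`. -/
def Live : ℕ → Finset (V × V) → V → Prop
  | 0, _, _ => True
  | 1, E', v => ∃ e ∈ E', e.1 = v
  | n + 2, E', v => ∃ e ∈ E', e.1 = v ∧ ∀ f ∈ E', Live (n + 1) (E'.erase f) e.2

end Defs

/-- Formulas of sabotage modal logic over a set `P` of propositions. -/
inductive SML (P : Type*) : Type _
  | top : SML P
  | atom : P → SML P
  | neg : SML P → SML P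
  | and : SML P → SML P → SML P
  | dia : SML P → SML P
  | sab : SML P → SML P

namespace SML
/-- Disjunction. -/
def or {P : Type*} (φ ψ : SML P) : SML P := .neg (.and (.neg φ) (.neg ψ))
/-- Box. -/
def box {P : Type*} (φ : SML P) : SML P := .neg (.dia (.neg φ))
/-- Sabotage box `■`. -/
def sabBox {P : Type*} (φ : SML P) : SML P := .neg (.sab (.neg φ))
end SML

/-- Truth of an SML formula at world `w` of the sabotage model `(W, R, Val)`. -/
def Sat {W P : Type*} [DecidableEq W] (Val : P → Set W) :
    SML P → Finset (W × W) → W → Prop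
  | .top, _, _ => True
  | .atom q, _, w => w ∈ Val q
  | .neg φ, R, w => ¬ Sat Val φ R w
  | .and φ ψ, R, w => Sat Val φ R w ∧ Sat Val ψ R w
  | .dia φ, R, w => ∃ u, (w, u) ∈ R ∧ Sat Val φ R u
  | .sab φ, R, w => ∃ x ∈ R, Sat Val φ (R.erase x) w

/-- The formulas `ρ₀ := g`, `ρ_{n+1} := g ∨ ◇■ρ_n`, over the single proposition `g`. -/
def rho : ℕ → SML Unit
  | 0 => .atom ()
  | n + 1 => SML.or (.atom ()) (.dia (SML.sabBox (rho n)))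

/-- The formulas `γ₁ := ◇⊤`, `γ_{n+1} := ◇■γ_n` (the value at `0` is a dummy). -/
def gamma : ℕ → SML Unit
  | 0 => .top
  | 1 => .dia .top
  | n + 2 => .dia (SML.sabBox (gamma (n + 1)))

/-!
The demon defeats every runner strategy by always deleting the edge from the runner's current
position to `vg`. Then whenever the runner is to move there is no edge into `vg` from her position,
so she never reaches `vg`; this holds initially because `v₀ ≠ vg` and `(v₀, vg) ∉ E`. Playing this
demon strategy against `σr` gives a play consistent with `σr` that avoids `vg`.
-/

section Outcome

variable {V : Type*} [DecidableEq V]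

open Classical in
noncomputable def tbNext (σr σd : TbState V → Option (V × V)) (s : TbState V) :
    Option (TbState V) :=
  if (tbActR s).Nonempty ∧ (tbActD s).Nonempty then some (tbDelta s (σr s) (σd s)) else none

noncomputable def tbOutcome (σr σd : TbState V → Option (V × V)) (s₀ : TbState V) :
    ℕ → Option (TbState V)
  | 0 => some s₀
  | n + 1 => (tbOutcome σr σd s₀ n).bind (tbNext σr σd)

theorem tbStep_actions_nonempty {s t : TbState V} (h : tbStep s t) :
    (tbActR s).Nonempty ∧ (tbActD s).Nonempty := by
  obtain ⟨ar, ad, har, had, -⟩ := h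
  exact ⟨⟨ar, har⟩, ⟨ad, had⟩⟩

variable {σr σd : TbState V → Option (V × V)}

theorem tbStepBy_of_tbNext_eq_some (hr : TbStratR σr) (hd : TbStratD σd) {s t : TbState V}
    (h : tbNext σr σd s = some t) : tbStepBy s (σr s) (σd s) t := by
  unfold tbNext at h
  split_ifs at h with hne
  exact ⟨hr s hne.1, hd s hne.2, (Option.some_inj.mp h).symm⟩

theorem tbOutcome_succ_eq_some {s₀ t : TbState V} {n : ℕ}
    (h : tbOutcome σr σd s₀ (n + 1) = some t) :
    ∃ s, tbOutcome σr σd s₀ n = some s ∧ tbNext σr σd s = some t :=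
  Option.bind_eq_some_iff.mp h

theorem tbConsRD_tbOutcome (hr : TbStratR σr) (hd : TbStratD σd) (s₀ : TbState V) :
    TbConsRD σr σd (tbOutcome σr σd s₀) := by
  intro n s t hs ht
  obtain ⟨s', hs', hnext⟩ := tbOutcome_succ_eq_some ht
  rw [hs, Option.some_inj] at hs'
  subst hs'
  exact tbStepBy_of_tbNext_eq_some hr hd hnext

theorem isPlay_tbOutcome (hr : TbStratR σr) (hd : TbStratD σd) (s₀ : TbState V) :
    IsPlay tbStep s₀ (tbOutcome σr σd s₀) := by
  refine ⟨rfl, fun n t ht => ?_, fun n s hs ⟨t, hst⟩ => ?_⟩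
  · obtain ⟨s, hs, hnext⟩ := tbOutcome_succ_eq_some ht
    exact ⟨s, hs, _, _, tbStepBy_of_tbNext_eq_some hr hd hnext⟩
  · simp [tbOutcome, hs, tbNext, tbStep_actions_nonempty hst]

theorem TbConsRD.tbConsR {p : ℕ → Option (TbState V)} (h : TbConsRD σr σd p) : TbConsR σr p :=
  fun n s t hs ht => ⟨σd s, h n s t hs ht⟩

theorem TbConsRD.tbConsD {p : ℕ → Option (TbState V)} (h : TbConsRD σr σd p) : TbConsD σd p :=
  fun n s t hs ht => ⟨σr s, h n s t hs ht⟩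

theorem IsPlay.forall_of_tbConsD_invariant {p : ℕ → Option (TbState V)} {s₀ : TbState V}
    (hp : IsPlay tbStep s₀ p) (hd : TbConsD σd p) {P : TbState V → Prop} (hs₀ : P s₀)
    (hstep : ∀ s ar t, P s → tbStepBy s ar (σd s) t → P t) :
    ∀ n s, p n = some s → P s := by
  intro n
  induction n with
  | zero => intro s hs; rw [hp.1, Option.some_inj] at hs; exact hs ▸ hs₀
  | succ n ih =>
    intro t ht
    obtain ⟨s, hs, -⟩ := hp.2.1 n t ht
    obtain ⟨ar, hst⟩ := hd n s t hs ht
    exact hstep s ar t (ih s hs) hst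

end Outcome

section CutGoalEdge

variable {V : Type*} [DecidableEq V]

open Classical in
noncomputable def cutGoalEdge (vg : V) : TbState V → Option (V × V)
  | (_, Agent.r) => none
  | ((E', v), Agent.d) =>
      if (v, vg) ∈ E' then some (v, vg) else if h : E'.Nonempty then some h.choose else none

theorem tbStratD_cutGoalEdge (vg : V) : TbStratD (cutGoalEdge vg) := by
  rintro ⟨⟨E', v⟩, _ | _⟩ ⟨a, ha⟩
  · rfl
  · obtain ⟨e, he, rfl⟩ := ha
    simp only [cutGoalEdge]
    split_ifs with hv
    · exact ⟨_, hv, rfl⟩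
    · exact ⟨_, ‹E'.Nonempty›.choose_spec, rfl⟩
    · exact absurd ⟨e, he⟩ ‹¬E'.Nonempty›

def AwayFromGoal (vg : V) (s : TbState V) : Prop :=
  s.1.2 ≠ vg ∧ (s.2 = Agent.r → (s.1.2, vg) ∉ s.1.1)

theorem AwayFromGoal.tbStepBy_cutGoalEdge {vg : V} {s t : TbState V} {ar : Option (V × V)}
    (hs : AwayFromGoal vg s) (hst : tbStepBy s ar (cutGoalEdge vg s) t) : AwayFromGoal vg t := by
  obtain ⟨⟨E', v⟩, _ | _⟩ := s
  · obtain ⟨⟨⟨x, y⟩, he, rfl : x = v, rfl⟩, -, rfl⟩ := hst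
    refine ⟨fun hy => hs.2 rfl ?_, nofun⟩
    rwa [← hy]
  · obtain ⟨rfl, ⟨e, he, hcut⟩, rfl⟩ := hst
    simp only [hcut, tbDelta]
    refine ⟨hs.1, fun _ hmem => ?_⟩
    by_cases hv : (v, vg) ∈ E'
    · have : e = (v, vg) := by simpa [cutGoalEdge, hv] using hcut.symm
      exact Finset.notMem_erase _ _ (this ▸ hmem)
    · exact hv (Finset.mem_of_mem_erase hmem)

end CutGoalEdge

theorem runner_cannot_enforce_Fg_general {V : Type*} [DecidableEq V]
    (E : Finset (V × V)) (v₀ vg : V)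
    (hne : v₀ ≠ vg) (hedge : (v₀, vg) ∉ E) :
    ¬ ∃ σr : TbState V → Option (V × V), TbStratR σr ∧
        ∀ p : ℕ → Option (TbState V), IsPlay tbStep ((E, v₀), Agent.r) p → TbConsR σr p →
          ∃ n s, p n = some s ∧ s.1.2 = vg := by
  rintro ⟨σr, hr, hwin⟩
  have hd := tbStratD_cutGoalEdge vg
  have hplay := isPlay_tbOutcome hr hd ((E, v₀), Agent.r)
  have hcons := tbConsRD_tbOutcome hr hd ((E, v₀), Agent.r)
  obtain ⟨n, s, hs, hvg⟩ := hwin _ hplay hcons.tbConsR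
  have hsafe := hplay.forall_of_tbConsD_invariant hcons.tbConsD (P := AwayFromGoal vg)
    ⟨hne, fun _ => hedge⟩ fun _ _ _ => AwayFromGoal.tbStepBy_cutGoalEdge
  exact (hsafe n s hs).1 hvg

/-- If `v₀ ≠ v_g` and `(v₀, v_g) ∉ E`, then no positional runner strategy in
`S^tb(G)` guarantees that every consistent play from `((E,v₀),r)` visits a state whose runner
position is `v_g` (i.e. `⟨⟨{r}⟩⟩ F g` fails at `((E,v₀),r)`). -/
theorem runner_cannot_enforce_Fg {V : Type*} [DecidableEq V] [Fintype V]
    (E : Finset (V × V)) (hE : E.Nonempty) (v₀ vg : V)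
    (hne : v₀ ≠ vg) (hedge : (v₀, vg) ∉ E) :
    ¬ ∃ σr : TbState V → Option (V × V), TbStratR σr ∧
        ∀ p : ℕ → Option (TbState V), IsPlay tbStep ((E, v₀), Agent.r) p → TbConsR σr p →
          ∃ n s, p n = some s ∧ s.1.2 = vg :=
  runner_cannot_enforce_Fg_general E v₀ vg hne hedge
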